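/- Arslanov's completeness criterion for precomplete numberings: if A ⊆ ℕ is a computably enumerable set that is Turing incomplete (∅' is not Turing reducible to A) and γ is a precomplete numbering, then every total A-computable function f: ℕ → ℕ has a fixpoint modulo γ, i.e. there is an n ∈ ℕ with f(n) ∼_γ n. -/

import Mathlib

open Nat Part

/-- Partial functions on `ℕ` computable relative to an oracle set `A`. -/
inductive RecursiveInSet (A : Set ℕ) : (ℕ →. ℕ) → Prop
  | zero : RecursiveInSet A (pure 0)
  | succ : RecursiveInSet A ↑Nat.succ
  | left : RecursiveInSet A ↑fun n : ℕ => n.unpair.1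
  | right : RecursiveInSet A ↑fun n : ℕ => n.unpair.2
  | oracle : RecursiveInSet A ↑fun n : ℕ => A.indicator 1 n
  | pair {f g} : RecursiveInSet A f → RecursiveInSet A g →
      RecursiveInSet A fun n => Nat.pair <$> f n <*> g n
  | comp {f g} : RecursiveInSet A f → RecursiveInSet A g →
      RecursiveInSet A fun n => g n >>= f
  | prec {f g} : RecursiveInSet A f → RecursiveInSet A g →
      RecursiveInSet A (Nat.unpaired fun a n =>
        n.rec (f a) fun y IH => do let i ← IH; g (Nat.pair a (Nat.pair y i)))
  | rfind {f} : RecursiveInSet A f →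
      RecursiveInSet A fun a => Nat.rfind fun n => (fun m => m = 0) <$> f (Nat.pair a n)

/-- A total function `f : ℕ → ℕ` is `A`-computable. -/
def ComputableInSet (A : Set ℕ) (f : ℕ → ℕ) : Prop :=
  RecursiveInSet A fun n => Part.some (f n)

/-- A total binary function is `A`-computable. -/
def ComputableInSet₂ (A : Set ℕ) (h : ℕ → ℕ → ℕ) : Prop :=
  ComputableInSet A fun n => h n.unpair.1 n.unpair.2

/-- The characteristic function of a set of naturals. -/
noncomputable def chi (A : Set ℕ) : ℕ → ℕ := A.indicator 1

/-- Turing reducibility: `A ≤_T B`. -/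
def TuringLE (A B : Set ℕ) : Prop := ComputableInSet B (chi A)

/-- `A` is computable. -/
def SetComputable (A : Set ℕ) : Prop := ComputableInSet ∅ (chi A)

/-- `X` is computably enumerable in `A`: `X` is the domain of a partial
`A`-computable function. -/
def CEIn (A : Set ℕ) (X : Set ℕ) : Prop :=
  ∃ p : ℕ →. ℕ, RecursiveInSet A p ∧ X = p.Dom

/-- `A ≤_γ B` (`A` is `(γ,B)`-low): every total `A`-computable function has a
`B`-computable `γ`-lift. -/
def GammaLE (γ : ℕ → ℕ → Prop) (A B : Set ℕ) : Prop :=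
  ∀ f : ℕ → ℕ, ComputableInSet A f →
    ∃ g : ℕ → ℕ, ComputableInSet B g ∧ ∀ n, γ (f n) (g n)

/-- `A` is `γ`-low: `A ≤_γ ∅`. -/
def GammaLow (γ : ℕ → ℕ → Prop) (A : Set ℕ) : Prop := GammaLE γ A ∅

/-- `γ` is `(n, A)`-divisible (for finite `n`). -/
def DivisibleFin (γ : ℕ → ℕ → Prop) (n : ℕ) (A : Set ℕ) : Prop :=
  ∃ (x : Fin n → ℕ) (X : Fin n → Set ℕ),
    (∀ i, CEIn A (X i)) ∧
    (∀ i, {m | γ (x i) m} ⊆ X i) ∧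
    (∀ i j, i ≠ j → {m | γ (x i) m} ∩ X j = ∅)

/-- `γ` is `(ω, A)`-divisible. -/
def DivisibleOmega (γ : ℕ → ℕ → Prop) (A : Set ℕ) : Prop :=
  ∃ (x : ℕ → ℕ) (X : ℕ → Set ℕ),
    ComputableInSet A x ∧
    CEIn A {k : ℕ | k.unpair.2 ∈ X k.unpair.1} ∧
    (∀ i, {m | γ (x i) m} ⊆ X i) ∧
    (∀ i j, i ≠ j → {m | γ (x i) m} ∩ X j = ∅)

/-- `γ` is `A`-precomplete: every partial `A`-computable function has a total
`A`-computable totalization modulo `γ`. -/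
def PrecompleteIn (γ : ℕ → ℕ → Prop) (A : Set ℕ) : Prop :=
  ∀ ψ : ℕ →. ℕ, RecursiveInSet A ψ →
    ∃ f : ℕ → ℕ, ComputableInSet A f ∧ ∀ n, ∀ y ∈ ψ n, γ y (f n)

/-- `γ` is a c.e. numbering. -/
def CENumbering (γ : ℕ → ℕ → Prop) : Prop :=
  CEIn ∅ {k : ℕ | γ k.unpair.1 k.unpair.2}

/-- The `e`-th partial computable function. -/
def phi (e : ℕ) : ℕ →. ℕ := (Denumerable.ofNat Nat.Partrec.Code e).eval

/-- The `e`-th computably enumerable set. -/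
def Wset (e : ℕ) : Set ℕ := (phi e).Dom

/-- The halting set `∅'`. -/
def halting : Set ℕ := {e : ℕ | (phi e e).Dom}


/-!
Suppose `f` has no fixpoint modulo `γ`; we decide `∅'` with oracle `A`. Approximate the c.e. set
`A` by the stages `Aₛ` of an enumeration. By the recursion theorem and precompleteness (applied to
the universal function) there is a total computable `h` such that `h e` is `γ`-equivalent to the
following value whenever it is defined: wait for the stage `s` at which `φₑ(e)` halts, then compute
`f (h e)` with `Aₛ` as the oracle. With oracle `A` one can find a convergent computation of
`f (h e)` and a stage `t` by which the enumeration of `A` has settled on its use. Had `φₑ(e)`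
halted only after stage `t`, that value would be `f (h e)`, making `h e` a fixpoint of `f`;
hence `e ∈ ∅'` iff `φₑ(e)` halts within `t` steps.
-/

open Filter Encodable Denumerable
open Nat.Partrec (Code)

theorem Part.mem_natPair_seq_iff {u v : Part ℕ} {x : ℕ} :
    x ∈ (Nat.pair <$> u <*> v) ↔ ∃ a ∈ u, ∃ b ∈ v, x = Nat.pair a b := by
  simp [Seq.seq, Part.mem_bind_iff, Part.mem_map_iff, eq_comm]

theorem Part.map_mono {α β : Type*} (f : α → β) {u v : Part α} (h : u ≤ v) :
    u.map f ≤ v.map f := fun _ hy =>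
  let ⟨a, ha, hfa⟩ := (Part.mem_map_iff f).1 hy
  hfa ▸ Part.mem_map f (h a ha)

theorem Nat.rfind_mono {p q : ℕ →. Bool} (h : ∀ m, p m ≤ q m) : Nat.rfind p ≤ Nat.rfind q :=
  fun _ hx =>
    Nat.mem_rfind.2 ⟨h _ _ (Nat.mem_rfind.1 hx).1, fun hm => h _ _ ((Nat.mem_rfind.1 hx).2 hm)⟩

theorem Nat.exists_le_of_mem_rfindOpt {α : Type*} {f : ℕ → Option α} {a : α} {m : ℕ}
    (ha : a ∈ Nat.rfindOpt f) (hm : (f m).isSome) : ∃ n ≤ m, a ∈ f n := by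
  obtain ⟨n, hn, ha⟩ := Part.mem_bind_iff.1 ha
  refine ⟨n, not_lt.1 fun hmn => ?_, Part.mem_coe.1 ha⟩
  simpa [hm] using Nat.rfind_min hn hmn

theorem Nat.Partrec.Code.dom_eval_iff {c : Code} {n : ℕ} :
    (c.eval n).Dom ↔ ∃ s, (c.evaln s n).isSome := by
  simp only [Part.dom_iff_mem, Code.evaln_complete, Option.isSome_iff_exists, Option.mem_def]
  exact exists_comm

def initSeg (g : ℕ → ℕ) (l : ℕ) : List ℕ := (List.range l).map g

theorem initSeg_eq_initSeg_iff {g g' : ℕ → ℕ} {l : ℕ} :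
    initSeg g l = initSeg g' l ↔ ∀ i < l, g i = g' i := by
  simp [initSeg, List.map_inj_left]

theorem initSeg_take (g : ℕ → ℕ) {i j : ℕ} (h : i ≤ j) : (initSeg g j).take i = initSeg g i := by
  rw [initSeg, ← List.map_take, List.take_range, min_eq_left h, initSeg]

def listOracle (L : List ℕ) : ℕ →. ℕ := fun i => (L[i]? : Part ℕ)

theorem listOracle_initSeg_of_lt (g : ℕ → ℕ) {l i : ℕ} (h : i < l) :
    listOracle (initSeg g l) i = Part.some (g i) := by
  simp [listOracle, initSeg, h]

theorem listOracle_initSeg_le (g : ℕ → ℕ) (l i : ℕ) :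
    listOracle (initSeg g l) i ≤ (g : ℕ →. ℕ) i := by
  intro x hx
  by_cases h : i < l
  · rwa [listOracle_initSeg_of_lt g h] at hx
  · simp [listOracle, initSeg, Nat.le_of_not_lt h] at hx

/-! ### Oracle computations -/

inductive OracleCode : Type
  | zero | succ | left | right | oracle
  | pair : OracleCode → OracleCode → OracleCode
  | comp : OracleCode → OracleCode → OracleCode
  | prec : OracleCode → OracleCode → OracleCode
  | rfind : OracleCode → OracleCode

namespace OracleCode

def eval (O : ℕ →. ℕ) : OracleCode → ℕ →. ℕ
  | zero => pure 0
  | succ => ↑Nat.succ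
  | left => ↑fun n : ℕ => n.unpair.1
  | right => ↑fun n : ℕ => n.unpair.2
  | oracle => O
  | pair cf cg => fun n => Nat.pair <$> eval O cf n <*> eval O cg n
  | comp cf cg => fun n => eval O cg n >>= eval O cf
  | prec cf cg => Nat.unpaired fun a n =>
      n.rec (eval O cf a) fun y IH => do let i ← IH; eval O cg (Nat.pair a (Nat.pair y i))
  | rfind cf => fun a => Nat.rfind fun n => (fun m => m = 0) <$> eval O cf (Nat.pair a n)

theorem eval_mono {O O' : ℕ →. ℕ} (h : ∀ i, O i ≤ O' i) (c : OracleCode) (n : ℕ) :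
    eval O c n ≤ eval O' c n := by
  induction c generalizing n with
  | zero | succ | left | right => exact le_rfl
  | oracle => exact h n
  | pair cf cg ihf ihg =>
    intro x hx
    obtain ⟨a, ha, b, hb, rfl⟩ := Part.mem_natPair_seq_iff.1 hx
    exact Part.mem_natPair_seq_iff.2 ⟨a, ihf n a ha, b, ihg n b hb, rfl⟩
  | comp cf cg ihf ihg =>
    intro x hx
    obtain ⟨a, ha, hx⟩ := Part.mem_bind_iff.1 hx
    exact Part.mem_bind_iff.2 ⟨a, ihg n a ha, ihf a x hx⟩
  | prec cf cg ihf ihg =>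
    simp only [eval, Nat.unpaired]
    induction n.unpair.2 with
    | zero => exact ihf _
    | succ m ih =>
      intro x hx
      simp only [Part.bind_eq_bind, Part.mem_bind_iff] at hx ⊢
      obtain ⟨i, hi, hx⟩ := hx
      exact ⟨i, ih i hi, ihg _ x hx⟩
  | rfind cf ihf =>
    exact Nat.rfind_mono fun m => Part.map_mono _ (ihf _)

/-- The use principle: a convergent computation consults only finitely many oracle values. -/
theorem eventually_mem_eval {ι : Type*} {F : Filter ι} {O : ℕ →. ℕ} {O' : ι → ℕ →. ℕ}
    (hO : ∀ n, ∀ x ∈ O n, ∀ᶠ l in F, x ∈ O' l n) (c : OracleCode) {n x : ℕ}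
    (hx : x ∈ eval O c n) : ∀ᶠ l in F, x ∈ eval (O' l) c n := by
  induction c generalizing n x with
  | zero | succ | left | right => exact Eventually.of_forall fun _ => hx
  | oracle => exact hO n x hx
  | pair cf cg ihf ihg =>
    obtain ⟨a, ha, b, hb, rfl⟩ := Part.mem_natPair_seq_iff.1 hx
    exact ((ihf ha).and (ihg hb)).mono fun l h => Part.mem_natPair_seq_iff.2 ⟨a, h.1, b, h.2, rfl⟩
  | comp cf cg ihf ihg =>
    obtain ⟨a, ha, hx⟩ := Part.mem_bind_iff.1 hx
    exact ((ihg ha).and (ihf hx)).mono fun l h => Part.mem_bind_iff.2 ⟨a, h.1, h.2⟩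
  | prec cf cg ihf ihg =>
    simp only [eval, Nat.unpaired] at hx ⊢
    revert hx
    induction n.unpair.2 generalizing x with
    | zero => exact ihf
    | succ m ih =>
      intro hx
      simp only [Part.bind_eq_bind, Part.mem_bind_iff] at hx ⊢
      obtain ⟨i, hi, hx⟩ := hx
      exact ((ih hi).and (ihg hx)).mono fun l h => ⟨i, h⟩
  | rfind cf ihf =>
    obtain ⟨hx, hmin⟩ := Nat.mem_rfind.1 hx
    have key : ∀ {m b}, b ∈ (fun m => decide (m = 0)) <$> eval O cf (Nat.pair n m) →
        ∀ᶠ l in F, b ∈ (fun m => decide (m = 0)) <$> eval (O' l) cf (Nat.pair n m) := by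
      intro m b hb
      obtain ⟨a, ha, rfl⟩ := (Part.mem_map_iff _).1 hb
      exact (ihf ha).mono fun l h => Part.mem_map _ h
    have hbelow : ∀ᶠ l in F, ∀ m ∈ Set.Iio x,
        false ∈ (fun m => decide (m = 0)) <$> eval (O' l) cf (Nat.pair n m) :=
      (eventually_all_finite (Set.finite_Iio x)).2 fun m hm => key (hmin hm)
    exact ((key hx).and hbelow).mono fun l h => Nat.mem_rfind.2 ⟨h.1, fun hm => h.2 _ hm⟩

theorem partrec_eval_listOracle (c : OracleCode) :
    Partrec₂ fun (L : List ℕ) n => eval (listOracle L) c n := by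
  induction c with
  | zero => exact (Partrec.const' (Part.some 0)).to₂
  | succ => exact (Computable.succ.comp Computable.snd).partrec.to₂
  | left => exact (Computable.fst.comp (Computable.unpair.comp Computable.snd)).partrec.to₂
  | right => exact (Computable.snd.comp (Computable.unpair.comp Computable.snd)).partrec.to₂
  | oracle => exact (Computable.ofOption (Primrec.list_getElem?.to_comp)).to₂
  | pair cf cg ihf ihg =>
    have hg : Partrec₂ fun (p : List ℕ × ℕ) (a : ℕ) =>
        (eval (listOracle p.1) cg p.2).map (Nat.pair a) :=
      ((ihg.comp (Computable.fst.comp Computable.fst) (Computable.snd.comp Computable.fst)).map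
        (Primrec₂.natPair.to_comp.comp (Computable.snd.comp Computable.fst)
          Computable.snd).to₂).to₂
    refine (ihf.bind hg).to₂.of_eq fun p => ?_
    simp [eval, Seq.seq]
  | comp cf cg ihf ihg =>
    exact (ihg.bind (ihf.comp (Computable.fst.comp Computable.fst) Computable.snd).to₂).to₂
  | prec cf cg ihf ihg =>
    have hn₁ : Computable fun p : List ℕ × ℕ => p.2.unpair.1 :=
      Computable.fst.comp (Computable.unpair.comp Computable.snd)
    have hn₂ : Computable fun p : List ℕ × ℕ => p.2.unpair.2 :=
      Computable.snd.comp (Computable.unpair.comp Computable.snd)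
    have hstep : Partrec₂ fun (p : List ℕ × ℕ) (q : ℕ × ℕ) =>
        eval (listOracle p.1) cg (Nat.pair p.2.unpair.1 (Nat.pair q.1 q.2)) :=
      (ihg.comp (Computable.fst.comp Computable.fst)
        (Primrec₂.natPair.to_comp.comp (hn₁.comp Computable.fst)
          (Primrec₂.natPair.to_comp.comp (Computable.fst.comp Computable.snd)
            (Computable.snd.comp Computable.snd)))).to₂
    exact (Partrec.nat_rec hn₂ (ihf.comp Computable.fst hn₁) hstep).to₂
  | rfind cf ihf =>
    have hp : Partrec₂ fun (p : List ℕ × ℕ) (m : ℕ) =>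
        (fun m => decide (m = 0)) <$> eval (listOracle p.1) cf (Nat.pair p.2 m) :=
      ((ihf.comp (Computable.fst.comp Computable.fst)
        (Primrec₂.natPair.to_comp.comp (Computable.snd.comp Computable.fst) Computable.snd)).map
        ((Primrec.eq.comp Primrec.snd (Primrec.const 0)).decide.to_comp.to₂)).to₂
    exact (Partrec.rfind hp).to₂

end OracleCode

theorem coe_chi_eq_indicator (A : Set ℕ) : (chi A : ℕ →. ℕ) = fun n => A.indicator 1 n := by
  funext n
  by_cases h : n ∈ A <;> simp [chi, h] <;> rfl

theorem RecursiveInSet.exists_oracleCode {A : Set ℕ} {p : ℕ →. ℕ} (hp : RecursiveInSet A p) :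
    ∃ c : OracleCode, c.eval (chi A) = p := by
  induction hp with
  | zero => exact ⟨.zero, rfl⟩
  | succ => exact ⟨.succ, rfl⟩
  | left => exact ⟨.left, rfl⟩
  | right => exact ⟨.right, rfl⟩
  | oracle => exact ⟨.oracle, coe_chi_eq_indicator A⟩
  | pair _ _ ihf ihg =>
    obtain ⟨cf, rfl⟩ := ihf; obtain ⟨cg, rfl⟩ := ihg; exact ⟨.pair cf cg, rfl⟩
  | comp _ _ ihf ihg =>
    obtain ⟨cf, rfl⟩ := ihf; obtain ⟨cg, rfl⟩ := ihg; exact ⟨.comp cf cg, rfl⟩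
  | prec _ _ ihf ihg =>
    obtain ⟨cf, rfl⟩ := ihf; obtain ⟨cg, rfl⟩ := ihg; exact ⟨.prec cf cg, rfl⟩
  | rfind _ ihf =>
    obtain ⟨cf, rfl⟩ := ihf; exact ⟨.rfind cf, rfl⟩

theorem RecursiveInSet.exists_code_initSeg {A : Set ℕ} {p : ℕ →. ℕ} (hp : RecursiveInSet A p) :
    ∃ c : Code, (∀ l n, c.eval (Nat.pair (encode (initSeg (chi A) l)) n) ≤ p n) ∧
      ∀ n, ∀ x ∈ p n, ∀ᶠ l in atTop, x ∈ c.eval (Nat.pair (encode (initSeg (chi A) l)) n) := by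
  obtain ⟨co, rfl⟩ := hp.exists_oracleCode
  have hco : Nat.Partrec fun k => co.eval (listOracle (ofNat (List ℕ) k.unpair.1)) k.unpair.2 :=
    Partrec.nat_iff.1 <| co.partrec_eval_listOracle.comp
      ((Primrec.ofNat (List ℕ)).to_comp.comp (Computable.fst.comp Computable.unpair))
      (Computable.snd.comp Computable.unpair)
  obtain ⟨c, hc⟩ := Code.exists_code.1 hco
  have hc' : ∀ L n, c.eval (Nat.pair (encode L) n) = co.eval (listOracle L) n := by
    simp [hc, ofNat_encode]
  refine ⟨c, fun l n => ?_, fun n x hx => ?_⟩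
  · rw [hc']
    exact co.eval_mono (listOracle_initSeg_le (chi A) l) n
  · simp only [hc']
    refine co.eventually_mem_eval (fun i y hy => ?_) hx
    filter_upwards [eventually_gt_atTop i] with l hl
    rwa [listOracle_initSeg_of_lt _ hl]

/-- `m` encodes a pair `(l, k)`: run `c` for `k` steps on `x`, with the first `l` values of `g`
as oracle. -/
def runOnPrefix (c : Code) (g : ℕ → ℕ) (m x : ℕ) : Option ℕ :=
  c.evaln m.unpair.2 (Nat.pair (encode (initSeg g m.unpair.1)) x)

theorem runOnPrefix_eq_of_initSeg_eq {c : Code} {g g' : ℕ → ℕ} {m m' : ℕ}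
    (h : initSeg g m = initSeg g' m) (hm' : m' ≤ m) (x : ℕ) :
    runOnPrefix c g m' x = runOnPrefix c g' m' x := by
  have hle : m'.unpair.1 ≤ m := (Nat.unpair_left_le m').trans hm'
  rw [runOnPrefix, runOnPrefix, initSeg_eq_initSeg_iff.2 fun i hi =>
    initSeg_eq_initSeg_iff.1 h i (hi.trans_le hle)]

theorem ComputableInSet.exists_runOnPrefix {A : Set ℕ} {f : ℕ → ℕ} (hf : ComputableInSet A f) :
    ∃ c : Code, (∀ m x, ∀ y ∈ runOnPrefix c (chi A) m x, y = f x) ∧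
      ∀ x, ∃ m, (runOnPrefix c (chi A) m x).isSome := by
  obtain ⟨c, hsound, hcomplete⟩ := RecursiveInSet.exists_code_initSeg hf
  refine ⟨c, fun m x y hy => Part.mem_some_iff.1 (hsound _ x y (Code.evaln_sound hy)), fun x => ?_⟩
  obtain ⟨l, hl⟩ := (hcomplete x (f x) (Part.mem_some _)).exists
  obtain ⟨k, hk⟩ := Code.evaln_complete.1 hl
  exact ⟨Nat.pair l k, by simpa [runOnPrefix] using Option.isSome_iff_exists.2 ⟨_, hk⟩⟩

/-! ### Computability relative to a set -/

section Relative

variable {A : Set ℕ}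

theorem RecursiveInSet.of_eq {f g : ℕ →. ℕ} (hf : RecursiveInSet A f) (H : ∀ n, f n = g n) :
    RecursiveInSet A g :=
  funext H ▸ hf

theorem RecursiveInSet.of_partrec {f : ℕ →. ℕ} (hf : Nat.Partrec f) : RecursiveInSet A f := by
  induction hf with
  | zero => exact .zero
  | succ => exact .succ
  | left => exact .left
  | right => exact .right
  | pair _ _ ihf ihg => exact .pair ihf ihg
  | comp _ _ ihf ihg => exact .comp ihf ihg
  | prec _ _ ihf ihg => exact .prec ihf ihg
  | rfind _ ihf => exact .rfind ihf

theorem recursiveInSet_empty_iff {f : ℕ →. ℕ} : RecursiveInSet ∅ f ↔ Nat.Partrec f := by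
  refine ⟨fun hf => ?_, .of_partrec⟩
  induction hf with
  | zero => exact .zero
  | succ => exact .succ
  | left => exact .left
  | right => exact .right
  | oracle => exact Nat.Partrec.zero.of_eq fun n => by simp; rfl
  | pair _ _ ihf ihg => exact .pair ihf ihg
  | comp _ _ ihf ihg => exact .comp ihf ihg
  | prec _ _ ihf ihg => exact .prec ihf ihg
  | rfind _ ihf => exact .rfind ihf

theorem ComputableInSet.of_computable {f : ℕ → ℕ} (hf : Computable f) : ComputableInSet A f :=
  .of_partrec (Partrec.nat_iff.1 hf)

theorem ComputableInSet.comp {f g : ℕ → ℕ} (hf : ComputableInSet A f) (hg : ComputableInSet A g) :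
    ComputableInSet A fun n => f (g n) :=
  (RecursiveInSet.comp hf hg).of_eq fun _ => Part.bind_some _ _

theorem ComputableInSet.pair {f g : ℕ → ℕ} (hf : ComputableInSet A f) (hg : ComputableInSet A g) :
    ComputableInSet A fun n => Nat.pair (f n) (g n) :=
  (RecursiveInSet.pair hf hg).of_eq fun n => by simp [Seq.seq]

theorem computableInSet_chi (A : Set ℕ) : ComputableInSet A (chi A) :=
  RecursiveInSet.oracle.of_eq fun n => congrFun (coe_chi_eq_indicator A).symm n

theorem ComputableInSet.nat_rec (a : ℕ) {s : ℕ → ℕ → ℕ} (hs : ComputableInSet₂ A s) :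
    ComputableInSet A fun j => Nat.rec (motive := fun _ => ℕ) a s j := by
  have hstep : ComputableInSet A fun w => s w.unpair.2.unpair.1 w.unpair.2.unpair.2 :=
    hs.comp (.of_computable (Computable.snd.comp Computable.unpair))
  have hrec := (RecursiveInSet.prec (ComputableInSet.of_computable (Computable.const a)) hstep).comp
    (ComputableInSet.of_computable (A := A)
      (Primrec₂.natPair.comp (Primrec.const 0) Primrec.id).to_comp)
  have hval : ∀ j, Nat.rec (Part.some a) (fun y IH => IH.bind fun i => Part.some (s y i)) j =
      Part.some (Nat.rec (motive := fun _ => ℕ) a s j) := by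
    intro j
    induction j with
    | zero => rfl
    | succ j ih => simp [ih]
  refine hrec.of_eq fun j => ?_
  simp [Nat.unpaired, hval]

theorem ComputableInSet.encode_initSeg {g : ℕ → ℕ} (hg : ComputableInSet A g) :
    ComputableInSet A fun j => encode (initSeg g j) := by
  have hsnoc : Computable fun z : ℕ => encode (ofNat (List ℕ) z.unpair.1 ++ [z.unpair.2]) :=
    Computable.encode.comp <| Primrec.to_comp <| Primrec.list_append.comp
      ((Primrec.ofNat _).comp (Primrec.fst.comp Primrec.unpair))
      (Primrec.list_cons.comp (Primrec.snd.comp Primrec.unpair) (Primrec.const []))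
  have hstep : ComputableInSet₂ A fun y acc => encode (ofNat (List ℕ) acc ++ [g y]) :=
    (of_computable hsnoc).comp ((of_computable (Computable.snd.comp Computable.unpair)).pair
      (hg.comp (of_computable (Computable.fst.comp Computable.unpair)))) |>.of_eq fun _ => by simp
  refine (nat_rec 0 hstep).of_eq fun j => ?_
  congr 1
  induction j with
  | zero => rfl
  | succ j ih => simp [ih, initSeg, List.range_succ]

theorem ComputableInSet.of_computable_initSeg {F : List ℕ → ℕ → ℕ} (hF : Computable₂ F)
    {ℓ : ℕ → ℕ} (hℓ : Computable ℓ) :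
    ComputableInSet A fun n => F (initSeg (chi A) (ℓ n)) n := by
  have hF' : Computable fun z : ℕ => F (ofNat (List ℕ) z.unpair.1) z.unpair.2 :=
    hF.comp ((Primrec.ofNat _).to_comp.comp (Computable.fst.comp Computable.unpair))
      (Computable.snd.comp Computable.unpair)
  refine ((of_computable hF').comp (((computableInSet_chi A).encode_initSeg.comp
    (of_computable hℓ)).pair (of_computable Computable.id))).of_eq fun n => ?_
  simp [ofNat_encode]

theorem ComputableInSet.find {P : ℕ → ℕ → Prop} [∀ x, DecidablePred (P x)]
    (hP : ComputableInSet₂ A fun x m => if P x m then 0 else 1) (H : ∀ x, ∃ m, P x m) :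
    ComputableInSet A fun x => Nat.find (H x) := by
  refine (RecursiveInSet.rfind hP).of_eq fun x => Part.eq_some_iff.2 (Nat.mem_rfind.2 ?_)
  exact ⟨by simpa using Nat.find_spec (H x), fun hm => by simpa using Nat.find_min (H x) hm⟩

end Relative

theorem CEIn.exists_code {A : Set ℕ} (h : CEIn ∅ A) :
    ∃ c : Code, ∀ i, i ∈ A ↔ (c.eval i).Dom := by
  obtain ⟨p, hp, rfl⟩ := h
  obtain ⟨c, rfl⟩ := Code.exists_code.1 (recursiveInSet_empty_iff.1 hp)
  exact ⟨c, fun _ => Iff.rfl⟩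

/-! ### Enumeration stages of a c.e. set -/

def stageChi (cA : Code) (s i : ℕ) : ℕ := if (cA.evaln s i).isSome then 1 else 0

theorem primrec_stageChi : Primrec fun p : Code × ℕ × ℕ => stageChi p.1 p.2.1 p.2.2 :=
  Primrec.ite (Primrec.eq.comp (Primrec.option_isSome.comp (Code.primrec_evaln.comp
    (((Primrec.fst.comp Primrec.snd).pair Primrec.fst).pair (Primrec.snd.comp Primrec.snd))))
    (Primrec.const true)) (Primrec.const 1) (Primrec.const 0)

theorem primrec_initSeg_stageChi (cA : Code) :
    Primrec₂ fun s j => initSeg (stageChi cA s) j :=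
  (Primrec.list_map (Primrec.list_range.comp Primrec.snd) (primrec_stageChi.comp
    ((Primrec.const cA).pair ((Primrec.fst.comp Primrec.fst).pair Primrec.snd))).to₂).to₂

theorem stageChi_mono {cA : Code} {s t : ℕ} (hst : s ≤ t) (i : ℕ) :
    stageChi cA s i ≤ stageChi cA t i := by
  by_cases h : (cA.evaln s i).isSome
  · obtain ⟨y, hy⟩ := Option.isSome_iff_exists.1 h
    have ht : (cA.evaln t i).isSome := Option.isSome_iff_exists.2 ⟨y, Code.evaln_mono hst hy⟩
    simp [stageChi, h, ht]
  · simp [stageChi, h]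

section Approximation

variable {A : Set ℕ} {cA : Code} (hA : ∀ i, i ∈ A ↔ (cA.eval i).Dom)
include hA

theorem stageChi_le_chi (s i : ℕ) : stageChi cA s i ≤ chi A i := by
  by_cases h : (cA.evaln s i).isSome
  · simp [stageChi, chi, h, (hA i).2 (Code.dom_eval_iff.2 ⟨s, h⟩)]
  · simp [stageChi, h]

theorem exists_stageChi_eq_chi (i : ℕ) : ∃ s, stageChi cA s i = chi A i := by
  by_cases h : i ∈ A
  · obtain ⟨s, hs⟩ := Code.dom_eval_iff.1 ((hA i).1 h)
    exact ⟨s, by simp [stageChi, chi, h, hs]⟩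
  · exact ⟨0, le_antisymm (stageChi_le_chi hA 0 i) (by simp [chi, h])⟩

theorem stageChi_eq_chi_of_le {s t i : ℕ} (hst : s ≤ t) (h : stageChi cA s i = chi A i) :
    stageChi cA t i = chi A i :=
  le_antisymm (stageChi_le_chi hA t i) (h.symm.trans_le (stageChi_mono hst i))

theorem initSeg_stageChi_of_le {s t j : ℕ} (hst : s ≤ t)
    (h : initSeg (stageChi cA s) j = initSeg (chi A) j) :
    initSeg (stageChi cA t) j = initSeg (chi A) j :=
  initSeg_eq_initSeg_iff.2 fun i hi =>
    stageChi_eq_chi_of_le hA hst (initSeg_eq_initSeg_iff.1 h i hi)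

theorem exists_initSeg_stageChi (j : ℕ) :
    ∃ s, initSeg (stageChi cA s) j = initSeg (chi A) j := by
  have hev : ∀ i, ∀ᶠ s in atTop, stageChi cA s i = chi A i := fun i =>
    let ⟨s, hs⟩ := exists_stageChi_eq_chi hA i
    eventually_atTop.2 ⟨s, fun _ hst => stageChi_eq_chi_of_le hA hst hs⟩
  obtain ⟨s, hs⟩ := ((eventually_all_finite (Set.finite_Iio j)).2 fun i _ => hev i).exists
  exact ⟨s, initSeg_eq_initSeg_iff.2 hs⟩

end Approximation

/-! ### Reducing `∅'` to `A` -/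

theorem PrecompleteIn.exists_computable_fixedPoint {γ : ℕ → ℕ → Prop}
    (hpre : PrecompleteIn γ ∅) {Θ : ℕ → ℕ →. ℕ} (hΘ : Partrec₂ Θ) :
    ∃ h : ℕ → ℕ, Computable h ∧ ∀ e, ∀ y ∈ Θ e (h e), γ y (h e) := by
  have hU : Nat.Partrec fun k => (ofNat Code k.unpair.1).eval k.unpair.2 :=
    Partrec.nat_iff.1 <| Code.eval_part.comp
      ((Primrec.ofNat Code).to_comp.comp (Computable.fst.comp Computable.unpair))
      (Computable.snd.comp Computable.unpair)
  obtain ⟨u, hu, hUu⟩ := hpre _ (.of_partrec hU)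
  have hu : Computable u := Partrec.nat_iff.2 (recursiveInSet_empty_iff.1 hu)
  have hcode : Computable fun p : Code × ℕ => u (Nat.pair (encode p.1) p.2) :=
    hu.comp (Primrec₂.natPair.to_comp.comp (Computable.encode.comp Computable.fst) Computable.snd)
  obtain ⟨d, hd⟩ := Code.fixed_point₂ (hΘ.comp Computable.snd hcode).to₂
  refine ⟨fun e => u (Nat.pair (encode d) e), hcode.comp (Computable.const d |>.pair .id),
    fun e y hy => hUu _ y ?_⟩
  simpa [hd, ofNat_encode] using hy

theorem mem_halting_iff {e : ℕ} : e ∈ halting ↔ ∃ s, ((ofNat Code e).evaln s e).isSome :=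
  Code.dom_eval_iff

def haltStage (e : ℕ) : Part ℕ := Nat.rfind fun s => ((ofNat Code e).evaln s e).isSome

theorem exists_mem_haltStage {e : ℕ} (he : e ∈ halting) :
    ∃ s ∈ haltStage e, ((ofNat Code e).evaln s e).isSome := by
  obtain ⟨s, hs⟩ := mem_halting_iff.1 he
  obtain ⟨s', hs'⟩ := Part.dom_iff_mem.1 <|
    (Nat.rfind_dom (p := fun s => ((ofNat Code e).evaln s e).isSome)).2
      ⟨s, by simpa using hs, fun _ => trivial⟩
  exact ⟨s', hs', by simpa using Nat.rfind_spec hs'⟩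

/-- Wait until `φₑ(e)` halts, at stage `s`, then search for a run of `c` on `x` that converges
with the stage-`s` approximation of `A` as oracle. -/
def approxValue (cA c : Code) (e x : ℕ) : Part ℕ :=
  haltStage e >>= fun s => Nat.rfindOpt fun m => runOnPrefix c (stageChi cA s) m x

theorem partrec_approxValue (cA c : Code) : Partrec₂ (approxValue cA c) := by
  have hhalt : Partrec haltStage :=
    Partrec.rfind (Primrec.option_isSome.comp (Code.primrec_evaln.comp
      ((Primrec.snd.pair ((Primrec.ofNat Code).comp Primrec.fst)).pair
        Primrec.fst))).to_comp.partrec.to₂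
  have hrun : Primrec₂ fun (a : (ℕ × ℕ) × ℕ) (m : ℕ) =>
      runOnPrefix c (stageChi cA a.2) m a.1.2 := by
    have hm : Primrec fun q : ((ℕ × ℕ) × ℕ) × ℕ => q.2.unpair :=
      Primrec.unpair.comp Primrec.snd
    exact Code.primrec_evaln.comp (((Primrec.snd.comp hm).pair (Primrec.const c)).pair
      (Primrec₂.natPair.comp (Primrec.encode.comp ((primrec_initSeg_stageChi cA).comp
        (Primrec.snd.comp Primrec.fst) (Primrec.fst.comp hm)))
        (Primrec.snd.comp (Primrec.fst.comp Primrec.fst))))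
  exact ((hhalt.comp Computable.fst).bind (Partrec.rfindOpt hrun.to_comp).to₂).to₂

/-- `w` encodes a pair `(m, t)`: the run `m` of `c` on `x` converges with the true oracle, and
the approximation of `A` at stage `t` is correct on the oracle prefix of length `m`. -/
def IsSettledAt (A : Set ℕ) (cA c : Code) (x w : ℕ) : Prop :=
  (runOnPrefix c (chi A) w.unpair.1 x).isSome ∧
    initSeg (stageChi cA w.unpair.2) w.unpair.1 = initSeg (chi A) w.unpair.1

noncomputable instance (A : Set ℕ) (cA c : Code) (x : ℕ) : DecidablePred (IsSettledAt A cA c x) :=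
  fun _ => instDecidableAnd

theorem computableInSet_isSettledAt (A : Set ℕ) (cA c : Code) :
    ComputableInSet₂ A fun x w => if IsSettledAt A cA c x w then 0 else 1 := by
  have hw : Primrec fun p : List ℕ × ℕ => p.2.unpair.2.unpair :=
    Primrec.unpair.comp (Primrec.snd.comp (Primrec.unpair.comp Primrec.snd))
  have hm : Primrec fun p : List ℕ × ℕ => p.2.unpair.2.unpair.1.unpair :=
    Primrec.unpair.comp (Primrec.fst.comp hw)
  have hrun : Primrec fun p : List ℕ × ℕ => c.evaln p.2.unpair.2.unpair.1.unpair.2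
      (Nat.pair (encode (p.1.take p.2.unpair.2.unpair.1.unpair.1)) p.2.unpair.1) :=
    Code.primrec_evaln.comp (((Primrec.snd.comp hm).pair (Primrec.const c)).pair
      (Primrec₂.natPair.comp (Primrec.encode.comp
        (Primrec.list_take.comp (Primrec.fst.comp hm) Primrec.fst))
        (Primrec.fst.comp (Primrec.unpair.comp Primrec.snd))))
  have hF : Primrec₂ fun (L : List ℕ) (n : ℕ) =>
      if (c.evaln n.unpair.2.unpair.1.unpair.2
          (Nat.pair (encode (L.take n.unpair.2.unpair.1.unpair.1)) n.unpair.1)).isSome ∧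
        initSeg (stageChi cA n.unpair.2.unpair.2) n.unpair.2.unpair.1 = L then 0 else 1 :=
    Primrec.ite (PrimrecPred.and
      (Primrec.eq.comp (Primrec.option_isSome.comp hrun) (Primrec.const true))
      (Primrec.eq.comp ((primrec_initSeg_stageChi cA).comp (Primrec.snd.comp hw)
        (Primrec.fst.comp hw)) Primrec.fst)) (Primrec.const 0) (Primrec.const 1)
  refine (ComputableInSet.of_computable_initSeg hF.to_comp
    (Primrec.fst.comp (Primrec.unpair.comp (Primrec.snd.comp Primrec.unpair))).to_comp).of_eq
    fun n => ?_
  simp only [IsSettledAt, runOnPrefix, initSeg_take _ (Nat.unpair_left_le _)]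
  congr

section Reduction

variable {A : Set ℕ} {cA c : Code} (hA : ∀ i, i ∈ A ↔ (cA.eval i).Dom)
include hA

theorem exists_isSettledAt (hcomplete : ∀ x, ∃ m, (runOnPrefix c (chi A) m x).isSome) (x : ℕ) :
    ∃ w, IsSettledAt A cA c x w :=
  let ⟨m, hm⟩ := hcomplete x
  let ⟨t, ht⟩ := exists_initSeg_stageChi hA m
  ⟨Nat.pair m t, by simpa [IsSettledAt] using ⟨hm, ht⟩⟩

variable {f : ℕ → ℕ} (hsound : ∀ m x, ∀ y ∈ runOnPrefix c (chi A) m x, y = f x)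
include hsound

theorem mem_approxValue_of_isSettledAt {e x w s : ℕ} (hw : IsSettledAt A cA c x w)
    (hs : s ∈ haltStage e) (hts : w.unpair.2 ≤ s) : f x ∈ approxValue cA c e x := by
  have hsettled := initSeg_stageChi_of_le hA hts hw.2
  have hrun : (runOnPrefix c (stageChi cA s) w.unpair.1 x).isSome := by
    rw [runOnPrefix_eq_of_initSeg_eq hsettled le_rfl]
    exact hw.1
  obtain ⟨y, hy⟩ := Part.dom_iff_mem.1 <|
    (Nat.rfindOpt_dom (f := fun m => runOnPrefix c (stageChi cA s) m x)).2
      ⟨_, Option.isSome_iff_exists.1 hrun⟩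
  obtain ⟨n, hnm, hn⟩ := Nat.exists_le_of_mem_rfindOpt hy hrun
  rw [runOnPrefix_eq_of_initSeg_eq hsettled hnm] at hn
  exact Part.mem_bind_iff.2 ⟨s, hs, hsound n x y hn ▸ hy⟩

variable {γ : ℕ → ℕ → Prop} {h : ℕ → ℕ}
  (hfix : ∀ e, ∀ y ∈ approxValue cA c e (h e), γ y (h e)) (hno : ∀ n, ¬γ (f n) n)
include hfix hno

theorem mem_halting_iff_of_isSettledAt {e w : ℕ} (hw : IsSettledAt A cA c (h e) w) :
    e ∈ halting ↔ ((ofNat Code e).evaln w.unpair.2 e).isSome := by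
  refine ⟨fun he => ?_, fun ht => mem_halting_iff.2 ⟨_, ht⟩⟩
  obtain ⟨s, hs, hhalt⟩ := exists_mem_haltStage he
  rcases le_total s w.unpair.2 with hst | hts
  · obtain ⟨y, hy⟩ := Option.isSome_iff_exists.1 hhalt
    exact Option.isSome_iff_exists.2 ⟨y, Code.evaln_mono hst hy⟩
  · exact (hno (h e) (hfix e _ (mem_approxValue_of_isSettledAt hA hsound hw hs hts))).elim

theorem turingLE_halting (hcomplete : ∀ x, ∃ m, (runOnPrefix c (chi A) m x).isSome)
    (hh : Computable h) : TuringLE halting A := by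
  have hex := exists_isSettledAt hA hcomplete
  have hw := (ComputableInSet.find (computableInSet_isSettledAt A cA c) hex).comp
    (.of_computable hh)
  have hdec : Computable fun z : ℕ =>
      stageChi (ofNat Code z.unpair.1) z.unpair.2.unpair.2 z.unpair.1 :=
    (primrec_stageChi.comp ((Primrec.ofNat Code).comp (Primrec.fst.comp Primrec.unpair) |>.pair
      ((Primrec.snd.comp (Primrec.unpair.comp (Primrec.snd.comp Primrec.unpair))).pair
        (Primrec.fst.comp Primrec.unpair)))).to_comp
  refine ((ComputableInSet.of_computable hdec).comp
    ((ComputableInSet.of_computable Computable.id).pair hw)).of_eq fun e => ?_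
  classical
  simp [chi, stageChi, Set.indicator_apply,
    mem_halting_iff_of_isSettledAt hA hsound hfix hno (Nat.find_spec (hex (h e)))]

end Reduction

theorem arslanov_precomplete_general (γ : ℕ → ℕ → Prop)
    (A : Set ℕ) (hce : CEIn ∅ A) (hinc : ¬ TuringLE halting A)
    (hpre : PrecompleteIn γ ∅)
    (f : ℕ → ℕ) (hf : ComputableInSet A f) : ∃ n : ℕ, γ (f n) n := by
  by_contra! hno
  obtain ⟨cA, hA⟩ := hce.exists_code
  obtain ⟨c, hsound, hcomplete⟩ := hf.exists_runOnPrefix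
  obtain ⟨h, hh, hfix⟩ := hpre.exists_computable_fixedPoint (partrec_approxValue cA c)
  exact hinc (turingLE_halting hA hsound hfix hno hcomplete hh)

/-- Arslanov's completeness criterion for precomplete numberings:
if `A` is a Turing incomplete c.e. set and `γ` is precomplete, then every total
`A`-computable function has a fixpoint modulo `γ`. -/
theorem arslanov_precomplete (γ : ℕ → ℕ → Prop) (hγ : Equivalence γ)
    (A : Set ℕ) (hce : CEIn ∅ A) (hinc : ¬ TuringLE halting A)
    (hpre : PrecompleteIn γ ∅)
    (f : ℕ → ℕ) (hf : ComputableInSet A f) : ∃ n : ℕ, γ (f n) n :=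
  arslanov_precomplete_general γ A hce hinc hpre f hf
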